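/- In the voting game, assume additionally that V i > -c for every player i, that N_thld ≤ |I|, and that N_SID > |I| - N_thld. Then a profile x is a pure Nash equilibrium if and only if x is the all-truth profile (x i = 1 for all i) or the all-abstain profile (x i = 0 for all i). -/
import Mathlib


open Finset

/-- Number of players who vote (choose a nonzero action). -/
def Nvo {I : Type*} [Fintype I] (x : I → ℤ) : ℕ :=
  (Finset.univ.filter fun i => x i ≠ 0).card

/-- Number of players who report truth (action 1). -/
def Ntruth {I : Type*} [Fintype I] (x : I → ℤ) : ℕ :=
  (Finset.univ.filter fun i => x i = 1).card

/-- Number of players who cheat (action -1). -/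
def Ncheat {I : Type*} [Fintype I] (x : I → ℤ) : ℕ :=
  (Finset.univ.filter fun i => x i = -1).card

/-- Payoff of player `i` in the voting game. -/
noncomputable def payoff {I : Type*} [Fintype I] (R c P : ℝ) (Nthld : ℕ) (V : I → ℝ)
    (x : I → ℤ) (i : I) : ℝ :=
  if x i = 0 then 0
  else if Nthld ≤ Nvo x ∧ 2 * Nvo x ≤ 3 * Ntruth x then
    -- majority reports truth
    (if x i = 1 then R - c else -P - c - V i)
  else if Nthld ≤ Nvo x ∧ 2 * Nvo x ≤ 3 * Ncheat x then
    -- majority cheats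
    (if x i = 1 then -P - c else R - c - V i)
  else
    -- fewer than `Nthld` voters, or no two-thirds consensus
    (if x i = 1 then -c else -c - V i)

/-- A profile is valid if every action lies in {1, -1, 0}. -/
def ValidProfile {I : Type*} (x : I → ℤ) : Prop :=
  ∀ i, x i = 1 ∨ x i = -1 ∨ x i = 0

/-- Pure Nash equilibrium: valid profile where no unilateral deviation
(to an action in {1, -1, 0}) improves a player's payoff. -/
noncomputable def IsNash {I : Type*} [Fintype I] [DecidableEq I]
    (R c P : ℝ) (Nthld : ℕ) (V : I → ℝ) (x : I → ℤ) : Prop :=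
  ValidProfile x ∧
  ∀ i : I, ∀ a : ℤ, (a = 1 ∨ a = -1 ∨ a = 0) →
    payoff R c P Nthld V (Function.update x i a) i ≤ payoff R c P Nthld V x i

/-- Number of super-integrity drivers (SIDs): players with `V i > R - c`. -/
noncomputable def NSID {I : Type*} [Fintype I] (R c : ℝ) (V : I → ℝ) : ℕ :=
  (Finset.univ.filter fun i => R - c < V i).card

private lemma count_update {I : Type*} [Fintype I] [DecidableEq I] (x : I → ℤ) (j : I) (a : ℤ)
    (p : ℤ → Prop) [DecidablePred p] :
    ((univ.filter fun i => p (Function.update x j a i)).card : ℤ)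
      + (if p (x j) then 1 else 0) =
    ((univ.filter fun i => p (x i)).card : ℤ) + (if p a then 1 else 0) := by
  have key : ∀ f : I → ℤ, ((univ.filter fun i => p (f i)).card : ℤ)
      = ∑ i, if p (f i) then (1 : ℤ) else 0 := by
    intro f
    rw [Finset.card_filter]
    push_cast
    rfl
  rw [key, key, ← Finset.add_sum_erase _ _ (Finset.mem_univ j),
      ← Finset.add_sum_erase _ _ (Finset.mem_univ j)]
  have h : ∀ i ∈ univ.erase j,
      (if p (Function.update x j a i) then (1 : ℤ) else 0) = if p (x i) then 1 else 0 := by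
    intro i hi
    rw [Function.update_of_ne (Finset.mem_erase.mp hi).1]
  rw [Finset.sum_congr rfl h, Function.update_self]
  ring

private lemma Nvo_update {I : Type*} [Fintype I] [DecidableEq I] (x : I → ℤ) (j : I) (a : ℤ) :
    (Nvo (Function.update x j a) : ℤ) + (if x j ≠ 0 then 1 else 0)
      = (Nvo x : ℤ) + (if a ≠ 0 then 1 else 0) :=
  count_update x j a (fun v => v ≠ 0)

private lemma Ntruth_update {I : Type*} [Fintype I] [DecidableEq I] (x : I → ℤ) (j : I) (a : ℤ) :
    (Ntruth (Function.update x j a) : ℤ) + (if x j = 1 then 1 else 0)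
      = (Ntruth x : ℤ) + (if a = 1 then 1 else 0) :=
  count_update x j a (fun v => v = 1)

private lemma Ncheat_update {I : Type*} [Fintype I] [DecidableEq I] (x : I → ℤ) (j : I) (a : ℤ) :
    (Ncheat (Function.update x j a) : ℤ) + (if x j = -1 then 1 else 0)
      = (Ncheat x : ℤ) + (if a = -1 then 1 else 0) :=
  count_update x j a (fun v => v = -1)

private lemma nvo_eq_sum {I : Type*} [Fintype I] (x : I → ℤ) (hv : ValidProfile x) :
    Nvo x = Ntruth x + Ncheat x := by
  classical
  unfold Nvo Ntruth Ncheat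
  rw [← Finset.card_union_of_disjoint, ← Finset.filter_or]
  · apply congrArg
    apply Finset.filter_congr
    intro i _
    rcases hv i with h | h | h <;> simp [h]
  · rw [Finset.disjoint_left]
    intro i hi hi'
    simp only [Finset.mem_filter] at hi hi'
    omega

/-- If `V i > -c` for all players, `N_thld ≤ |I|`, and
`N_SID > |I| - N_thld`, the only pure Nash equilibria are the all-truth and the
all-abstain profiles. -/
theorem NE_characterization {I : Type*} [Fintype I] [DecidableEq I] [Nonempty I]
    (R c P : ℝ) (Nthld : ℕ) (V : I → ℝ)
    (hRc : c < R) (hc : 0 < c) (hP : 0 ≤ P) (hN : 2 ≤ Nthld)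
    (hV : ∀ i, -c < V i) (hcard : Nthld ≤ Fintype.card I)
    (hSID : (Fintype.card I : ℤ) - (Nthld : ℤ) < (NSID R c V : ℤ))
    (x : I → ℤ) :
    IsNash R c P Nthld V x ↔ ((∀ i, x i = 1) ∨ (∀ i, x i = 0)) := by
  constructor
  · rintro ⟨hvalid, hnash⟩
    have h0 : ∀ i, 0 ≤ payoff R c P Nthld V x i := by
      intro i
      have h := hnash i 0 (Or.inr (Or.inr rfl))
      have he : payoff R c P Nthld V (Function.update x i 0) i = 0 := by
        simp [payoff]
      linarith
    by_cases h1 : Nthld ≤ Nvo x ∧ 2 * Nvo x ≤ 3 * Ntruth x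
    · -- truth-majority regime: everybody plays 1
      left
      have hnc : ∀ i, x i ≠ -1 := by
        intro i hi
        have hp : payoff R c P Nthld V x i = -P - c - V i := by
          unfold payoff
          rw [if_neg (by rw [hi]; norm_num), if_pos h1, if_neg (by rw [hi]; norm_num)]
        have h0' := h0 i
        rw [hp] at h0'
        linarith [hV i]
      intro i
      rcases hvalid i with h | h | h
      · exact h
      · exact absurd h (hnc i)
      · exfalso
        have hdev := hnash i 1 (Or.inl rfl)
        have hnv := Nvo_update x i 1
        rw [if_neg (by simp [h]), if_pos (by norm_num)] at hnv
        have hnt := Ntruth_update x i 1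
        rw [if_neg (by simp [h]), if_pos rfl] at hnt
        have hy : payoff R c P Nthld V (Function.update x i 1) i = R - c := by
          unfold payoff
          rw [if_neg (by simp), if_pos ⟨by omega, by omega⟩, if_pos (by simp)]
        have hx0 : payoff R c P Nthld V x i = 0 := by simp [payoff, h]
        rw [hy, hx0] at hdev
        linarith
    · by_cases h2 : Nthld ≤ Nvo x ∧ 2 * Nvo x ≤ 3 * Ncheat x
      · -- cheat-majority regime: impossible
        exfalso
        have hnt : ∀ i, x i ≠ 1 := by
          intro i hi
          have hp : payoff R c P Nthld V x i = -P - c := by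
            unfold payoff
            rw [if_neg (by rw [hi]; norm_num), if_neg h1, if_pos h2, if_pos hi]
          have := h0 i
          rw [hp] at this
          linarith
        have hNt : Ntruth x = 0 := by
          unfold Ntruth
          rw [Finset.card_eq_zero, Finset.filter_eq_empty_iff]
          intro i _
          exact hnt i
        have hsum := nvo_eq_sum x hvalid
        have hCge : Nthld ≤ Ncheat x := by omega
        -- find a super-integrity driver among the cheaters
        set S := (univ.filter fun i => R - c < V i) with hS
        set C := (univ.filter fun i : I => x i = -1) with hCdef
        have hu := Finset.card_union_add_card_inter S C
        have hle : (S ∪ C).card ≤ Fintype.card I := Finset.card_le_univ _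
        have hSc : S.card = NSID R c V := rfl
        have hCc : C.card = Ncheat x := rfl
        have hpos : 0 < (S ∩ C).card := by omega
        obtain ⟨i, hi⟩ := Finset.card_pos.mp hpos
        rw [Finset.mem_inter] at hi
        have hiS : R - c < V i := (Finset.mem_filter.mp hi.1).2
        have hiC : x i = -1 := (Finset.mem_filter.mp hi.2).2
        have hp : payoff R c P Nthld V x i = R - c - V i := by
          unfold payoff
          rw [if_neg (by rw [hiC]; norm_num), if_neg h1, if_pos h2,
            if_neg (by rw [hiC]; norm_num)]
        have := h0 i
        rw [hp] at this
        linarith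
      · -- no consensus / below threshold: everybody abstains
        right
        have hnc : ∀ i, x i ≠ -1 := by
          intro i hi
          have hp : payoff R c P Nthld V x i = -c - V i := by
            unfold payoff
            rw [if_neg (by rw [hi]; norm_num), if_neg h1, if_neg h2,
              if_neg (by rw [hi]; norm_num)]
          have := h0 i
          rw [hp] at this
          linarith [hV i]
        have hNc : Ncheat x = 0 := by
          unfold Ncheat
          rw [Finset.card_eq_zero, Finset.filter_eq_empty_iff]
          intro i _
          exact hnc i
        have hsum := nvo_eq_sum x hvalid
        have hlt : Nvo x < Nthld := by
          by_contra hge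
          exact h1 ⟨by omega, by omega⟩
        have hnt : ∀ i, x i ≠ 1 := by
          intro i hi
          have hp : payoff R c P Nthld V x i = -c := by
            unfold payoff
            rw [if_neg (by rw [hi]; norm_num), if_neg (by omega), if_neg (by omega), if_pos hi]
          have := h0 i
          rw [hp] at this
          linarith
        intro i
        rcases hvalid i with h | h | h
        · exact absurd h (hnt i)
        · exact absurd h (hnc i)
        · exact h
  · rintro (htruth | habst)
    · -- all-truth profile is Nash
      refine ⟨fun i => Or.inl (htruth i), ?_⟩
      intro i a ha
      have hNvo : Nvo x = Fintype.card I := by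
        unfold Nvo
        rw [Finset.filter_true_of_mem (fun i _ => by rw [htruth i]; norm_num)]
        exact Finset.card_univ
      have hNt : Ntruth x = Fintype.card I := by
        unfold Ntruth
        rw [Finset.filter_true_of_mem (fun i _ => htruth i)]
        exact Finset.card_univ
      have hNc : Ncheat x = 0 := by
        unfold Ncheat
        rw [Finset.card_eq_zero, Finset.filter_eq_empty_iff]
        intro i _
        rw [htruth i]; norm_num
      have hreg : Nthld ≤ Nvo x ∧ 2 * Nvo x ≤ 3 * Ntruth x := ⟨by omega, by omega⟩
      have hpx : payoff R c P Nthld V x i = R - c := by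
        unfold payoff
        rw [if_neg (by rw [htruth i]; norm_num), if_pos hreg, if_pos (htruth i)]
      rw [hpx]
      rcases ha with rfl | rfl | rfl
      · rw [show (1 : ℤ) = x i from (htruth i).symm, Function.update_eq_self]
        rw [hpx]
      · -- deviation to cheating
        have hnv := Nvo_update x i (-1)
        rw [if_pos (by rw [htruth i]; norm_num), if_pos (by norm_num)] at hnv
        have hnc' := Ncheat_update x i (-1)
        rw [if_neg (by rw [htruth i]; norm_num), if_pos rfl] at hnc'
        have hNvoy : Nvo (Function.update x i (-1)) = Fintype.card I := by omega
        have hNcy : Ncheat (Function.update x i (-1)) = 1 := by omega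
        unfold payoff
        rw [if_neg (by simp)]
        by_cases hr : Nthld ≤ Nvo (Function.update x i (-1)) ∧
            2 * Nvo (Function.update x i (-1)) ≤ 3 * Ntruth (Function.update x i (-1))
        · rw [if_pos hr, if_neg (by simp)]
          have := hV i
          linarith
        · rw [if_neg hr, if_neg (by rw [hNvoy, hNcy]; omega), if_neg (by simp)]
          have := hV i
          linarith
      · -- deviation to abstaining
        have : payoff R c P Nthld V (Function.update x i 0) i = 0 := by
          simp [payoff]
        rw [this]
        linarith
    · -- all-abstain profile is Nash
      refine ⟨fun i => Or.inr (Or.inr (habst i)), ?_⟩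
      intro i a ha
      have hpx : payoff R c P Nthld V x i = 0 := by simp [payoff, habst i]
      rw [hpx]
      rcases ha with rfl | rfl | rfl
      · have hnv := Nvo_update x i 1
        rw [if_neg (by simp [habst i]), if_pos (by norm_num)] at hnv
        have hNvoy : Nvo (Function.update x i 1) = Nvo x + 1 := by omega
        have hNvo0 : Nvo x = 0 := by
          unfold Nvo
          rw [Finset.card_eq_zero, Finset.filter_eq_empty_iff]
          intro j _
          simp [habst j]
        unfold payoff
        rw [if_neg (by simp), if_neg (by rw [hNvoy, hNvo0]; omega),
          if_neg (by rw [hNvoy, hNvo0]; omega), if_pos (by simp)]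
        linarith
      · have hnv := Nvo_update x i (-1)
        rw [if_neg (by simp [habst i]), if_pos (by norm_num)] at hnv
        have hNvoy : Nvo (Function.update x i (-1)) = Nvo x + 1 := by omega
        have hNvo0 : Nvo x = 0 := by
          unfold Nvo
          rw [Finset.card_eq_zero, Finset.filter_eq_empty_iff]
          intro j _
          simp [habst j]
        unfold payoff
        rw [if_neg (by simp), if_neg (by rw [hNvoy, hNvo0]; omega),
          if_neg (by rw [hNvoy, hNvo0]; omega), if_neg (by simp)]
        have := hV i
        linarith
      · rw [show (0 : ℤ) = x i from (habst i).symm, Function.update_eq_self, hpx]
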